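/- arXiv:2408.11644 — 2 statements merged into one kernel-verified Lean document; each statement's English description precedes it below -/
import Mathlib

section
/- Let G be a (K_{p_1} ∪ ... ∪ K_{p_t})-saturated graph of order n > 3(p_1-2) + Σ_{i=2}^t p_i(p_i+1) with e(G) ≤ e(H(n; p_1,...,p_t)), let v be a minimum-degree vertex with neighborhood S, and let w ∉ S ∪ {v}. Then the graph G restricted to V(G) \ (S ∪ {v, w}) contains a subgraph isomorphic to K_{p_2} ∪ K_{p_3} ∪ ... ∪ K_{p_t}. -/
open SimpleGraph Finset

/-- `H` is a subgraph of `G` (up to isomorphism): an injective homomorphism exists. -/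
def IsSubgraphOf {α β : Type*} (H : SimpleGraph α) (G : SimpleGraph β) : Prop :=
  ∃ f : α → β, Function.Injective f ∧ ∀ a b, H.Adj a b → G.Adj (f a) (f b)

/-- `G` is `H`-saturated. -/
def IsSat {α β : Type*} (G : SimpleGraph α) (H : SimpleGraph β) : Prop :=
  ¬ IsSubgraphOf H G ∧
    ∀ u v : α, u ≠ v → ¬ G.Adj u v →
      IsSubgraphOf H (G ⊔ SimpleGraph.fromEdgeSet {s(u, v)})

/-- First position of block `i` (for `2 ≤ i`) in `H(n; p₁, …, p_t)`. -/
def blockStart (p : ℕ → ℕ) (i : ℕ) : ℕ :=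
  (p 1 - 2) + ∑ j ∈ Finset.Ico 2 i, (p j + 1)

def inBlock (p : ℕ → ℕ) (i : ℕ) (a : ℕ) : Prop :=
  blockStart p i ≤ a ∧ a < blockStart p i + (p i + 1)

/-- `H(n; p₁, …, p_t) = K_{p₁-2} ∨ (K_{p₂+1} ∪ ⋯ ∪ K_{p_t+1} ∪ I_m)`. -/
def Hgraph (n t : ℕ) (p : ℕ → ℕ) : SimpleGraph (Fin n) :=
  SimpleGraph.fromRel (fun u v =>
    (u : ℕ) < p 1 - 2 ∨ ∃ i, 2 ≤ i ∧ i ≤ t ∧ inBlock p i (u : ℕ) ∧ inBlock p i (v : ℕ))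

/-- The disjoint union `K_{p₁} ∪ K_{p₂} ∪ ⋯ ∪ K_{p_t}`. -/
def cliqueUnion (t : ℕ) (p : ℕ → ℕ) :
    SimpleGraph (Σ i : Fin t, Fin (p ((i : ℕ) + 1))) where
  Adj a b := a ≠ b ∧ a.1 = b.1
  symm := ⟨fun a b h => ⟨h.1.symm, h.2.symm⟩⟩
  loopless := ⟨fun a h => h.1 rfl⟩

/-- The disjoint union `K_{p₂} ∪ ⋯ ∪ K_{p_t}`. -/
def cliqueUnionTail (t : ℕ) (p : ℕ → ℕ) :
    SimpleGraph (Σ i : Fin (t - 1), Fin (p ((i : ℕ) + 2))) where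
  Adj a b := a ≠ b ∧ a.1 = b.1
  symm := ⟨fun a b h => ⟨h.1.symm, h.2.symm⟩⟩
  loopless := ⟨fun a h => h.1 rfl⟩

/-!
A copy of `K_{p₁} ∪ ⋯ ∪ K_{p_t}` in `G + vw` must use the edge `vw`, so `v` and `w` lie in one
of its cliques, `K_{p_j}` say, whose other `p_j - 2 ≥ p₁ - 2` vertices are common neighbours of
`v` and `w` forming a clique. Applying this to every non-neighbour `u` of `v` and double counting
the edges at `S = N(v)` shows that `δ(G) > p₁ - 2` would force `e(G) > e(H(n; p₁, …, p_t))`.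
Hence `|S| ≤ p₁ - 2`, so the clique through `vw` is exactly `S ∪ {v, w}` and `p_j = p₁`. The other
`t - 1` cliques of the copy avoid `S ∪ {v, w}`, lie in `G`, and are at least as large as
`K_{p₂}, …, K_{p_t}`.
-/

section Saturation

variable {α β : Type*} {G : SimpleGraph α} {u w : α}

lemma IsSat.exists_copy_through {H : SimpleGraph β} (hsat : IsSat G H) (hne : u ≠ w)
    (hnadj : ¬ G.Adj u w) :
    ∃ f : β → α, ∃ a b, Function.Injective f ∧ H.Adj a b ∧ f a = u ∧ f b = w ∧
      ∀ c d, H.Adj c d → s(c, d) ≠ s(a, b) → G.Adj (f c) (f d) := by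
  obtain ⟨f, hf, hadj⟩ := hsat.2 u w hne hnadj
  have hG : ∀ c d, H.Adj c d → s(f c, f d) ≠ s(u, w) → G.Adj (f c) (f d) := fun c d hcd h =>
    ((sup_adj _ _ _ _).1 (hadj c d hcd)).resolve_right fun h' => h ((fromEdgeSet_adj _).1 h').1
  obtain ⟨a, b, hab, hfa, hfb⟩ : ∃ a b, H.Adj a b ∧ f a = u ∧ f b = w := by
    by_contra! hno
    refine hsat.1 ⟨f, hf, fun c d hcd => hG c d hcd fun h => ?_⟩
    rcases Sym2.eq_iff.1 h with ⟨hc, hd⟩ | ⟨hc, hd⟩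
    · exact hno c d hcd hc hd
    · exact hno d c hcd.symm hd hc
  refine ⟨f, a, b, hf, hab, hfa, hfb, fun c d hcd h => hG c d hcd fun h' => h ?_⟩
  rw [← hfa, ← hfb] at h'
  exact Sym2.map.injective hf (by simpa using h')

variable {t : ℕ} {p : ℕ → ℕ}

lemma IsSat.exists_cliqueUnion_copy_through (hsat : IsSat G (cliqueUnion t p)) (hne : u ≠ w)
    (hnadj : ¬ G.Adj u w) :
    ∃ f : (Σ i : Fin t, Fin (p ((i : ℕ) + 1))) → α, ∃ i₀ a b, Function.Injective f ∧ a ≠ b ∧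
      f ⟨i₀, a⟩ = u ∧ f ⟨i₀, b⟩ = w ∧ ∀ c d, (cliqueUnion t p).Adj c d →
        s(c, d) ≠ s(⟨i₀, a⟩, ⟨i₀, b⟩) → G.Adj (f c) (f d) := by
  obtain ⟨f, ⟨i₀, a⟩, ⟨i₁, b⟩, hf, ⟨hab, hi⟩, hfa, hfb, hadj⟩ :=
    hsat.exists_copy_through hne hnadj
  obtain rfl : i₀ = i₁ := hi
  exact ⟨f, i₀, a, b, hf, fun h => hab (h ▸ rfl), hfa, hfb, hadj⟩

lemma exists_clique_of_cliqueUnion_copy_through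
    {f : (Σ i : Fin t, Fin (p ((i : ℕ) + 1))) → α} {i₀ : Fin t} {a b : Fin (p ((i₀ : ℕ) + 1))}
    (hf : Function.Injective f) (hab : a ≠ b)
    (hadj : ∀ c d, (cliqueUnion t p).Adj c d → s(c, d) ≠ s(⟨i₀, a⟩, ⟨i₀, b⟩) →
      G.Adj (f c) (f d)) :
    ∃ Q : Finset α, #Q = p ((i₀ : ℕ) + 1) - 2 ∧ (Q : Set α) ⊆ Set.range (fun x => f ⟨i₀, x⟩) ∧
      G.IsClique (Q : Set α) ∧ ∀ x ∈ Q, G.Adj (f ⟨i₀, a⟩) x ∧ G.Adj (f ⟨i₀, b⟩) x := by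
  classical
  have hmk : Function.Injective fun x : Fin (p ((i₀ : ℕ) + 1)) =>
      (⟨i₀, x⟩ : Σ i : Fin t, Fin (p ((i : ℕ) + 1))) :=
    fun _ _ h => eq_of_heq (Sigma.mk.inj_iff.1 h).2
  have hblock : ∀ x y, x ≠ y → x ∉ ({a, b} : Finset _) → G.Adj (f ⟨i₀, x⟩) (f ⟨i₀, y⟩) := by
    refine fun x y hxy hx => hadj _ _ ⟨fun h => hxy (hmk h), rfl⟩ fun h => hx ?_
    have : s(x, y) = s(a, b) := Sym2.map.injective hmk (by simpa using h)
    simpa [this] using Sym2.mem_mk_left x y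
  refine ⟨({a, b}ᶜ : Finset _).map ⟨_, hf.comp hmk⟩, ?_, ?_, ?_, ?_⟩
  · rw [card_map, card_compl, card_pair hab, Fintype.card_fin]
  · simp [Set.subset_def]
  · simp only [coe_map, coe_compl, Function.Embedding.coeFn_mk]
    rintro _ ⟨x, hx, rfl⟩ _ ⟨y, -, rfl⟩ hne
    exact hblock x y (fun h => hne (h ▸ rfl)) hx
  · simp only [mem_map, mem_compl, Function.Embedding.coeFn_mk]
    rintro _ ⟨x, hx, rfl⟩
    obtain ⟨hxa, hxb⟩ : x ≠ a ∧ x ≠ b := by simpa [not_or] using hx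
    exact ⟨(hblock x a hxa hx).symm, (hblock x b hxb hx).symm⟩

lemma IsSat.exists_common_clique (hmono : ∀ i j, 1 ≤ i → i ≤ j → j ≤ t → p i ≤ p j)
    (hsat : IsSat G (cliqueUnion t p)) (hne : u ≠ w) (hnadj : ¬ G.Adj u w) :
    ∃ Q : Finset α, p 1 - 2 ≤ #Q ∧ G.IsClique (Q : Set α) ∧
      ∀ x ∈ Q, G.Adj u x ∧ G.Adj w x := by
  obtain ⟨f, i₀, a, b, hf, hab, rfl, rfl, hadj⟩ := hsat.exists_cliqueUnion_copy_through hne hnadj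
  obtain ⟨Q, hQ, -, hQc, hQadj⟩ := exists_clique_of_cliqueUnion_copy_through hf hab hadj
  have := hmono 1 (i₀ + 1) le_rfl (by omega) i₀.2
  exact ⟨Q, by omega, hQc, hQadj⟩

end Saturation

namespace SimpleGraph

variable {α : Type*} [Fintype α] [DecidableEq α] (G : SimpleGraph α) [DecidableRel G.Adj]

lemma sum_degree_eq_sum_card_neighborFinset_inter (S : Finset α) :
    ∑ x ∈ S, G.degree x = ∑ y, #(G.neighborFinset y ∩ S) := by
  simp only [← card_neighborFinset_eq_degree, neighborFinset_eq_filter, filter_inter,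
    card_filter, univ_inter]
  rw [sum_comm]
  simp [G.adj_comm]

lemma le_two_mul_card_edgeFinset_of_common_neighbors (v : α)
    (hmin : ∀ u, G.degree v ≤ G.degree u) {k : ℕ}
    (hR : ∀ u, u ≠ v → ¬ G.Adj v u → k ≤ #(G.neighborFinset u ∩ G.neighborFinset v))
    {Q : Finset α} (hQ : Q ⊆ G.neighborFinset v) (hQc : G.IsClique (Q : Set α)) :
    (Fintype.card α - G.degree v) * G.degree v + G.degree v + #Q * (#Q - 1) +
      (Fintype.card α - G.degree v - 1) * k ≤ 2 * #G.edgeFinset := by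
  set S := G.neighborFinset v
  have hS : #S = G.degree v := card_neighborFinset_eq_degree G v
  have hv : v ∈ Sᶜ := by simp [S]
  have hout : #Sᶜ * G.degree v ≤ ∑ y ∈ Sᶜ, G.degree y :=
    card_nsmul_le_sum _ _ _ fun y _ => hmin y
  have hin : #Q * (#Q - 1) ≤ ∑ y ∈ S, #(G.neighborFinset y ∩ S) := by
    calc #Q * (#Q - 1) = ∑ y ∈ Q, #(Q.erase y) := by
          rw [sum_congr rfl fun y hy => card_erase_of_mem hy, sum_const, smul_eq_mul]
      _ ≤ ∑ y ∈ Q, #(G.neighborFinset y ∩ S) := sum_le_sum fun y hy =>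
          card_le_card fun x hx => by
            obtain ⟨hxy, hx⟩ := mem_erase.1 hx
            simpa [hQ hx] using hQc hy hx hxy.symm
      _ ≤ ∑ y ∈ S, #(G.neighborFinset y ∩ S) := sum_le_sum_of_subset hQ
  have hrest : G.degree v + #(Sᶜ.erase v) * k ≤ ∑ y ∈ Sᶜ, #(G.neighborFinset y ∩ S) := by
    rw [← add_sum_erase _ _ hv, inter_self, hS]
    refine add_le_add_right (card_nsmul_le_sum _ _ _ fun y hy => hR y (ne_of_mem_erase hy) ?_) _
    simpa [S] using mem_compl.1 (mem_of_mem_erase hy)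
  rw [card_erase_of_mem hv, card_compl, hS] at hrest
  rw [card_compl, hS] at hout
  rw [← sum_degrees_eq_twice_card_edges, ← sum_add_sum_compl S,
    sum_degree_eq_sum_card_neighborFinset_inter, ← sum_add_sum_compl S]
  omega

end SimpleGraph

section Hgraph

variable {n t : ℕ} {p : ℕ → ℕ}

open Classical in
lemma card_filter_inBlock_le (i : ℕ) : #{x : Fin n | inBlock p i x} ≤ p i + 1 := by
  calc _ ≤ #(Ico (blockStart p i) (blockStart p i + (p i + 1))) :=
        card_le_card_of_injOn Fin.val (fun x hx => by simpa [inBlock] using (mem_filter.1 hx).2)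
          Fin.val_injective.injOn
    _ = p i + 1 := by simp

open Classical in
lemma Hgraph_degree_le (u : Fin n) :
    (Hgraph n t p).degree u ≤ (if (u : ℕ) < p 1 - 2 then n - 1 else p 1 - 2) +
      ∑ i ∈ Icc 2 t, if inBlock p i u then p i else 0 := by
  have hsub : (Hgraph n t p).neighborFinset u ⊆
      (if (u : ℕ) < p 1 - 2 then univ.erase u
        else ({x | (x : ℕ) < p 1 - 2} : Finset (Fin n))) ∪
        (Icc 2 t).biUnion fun i =>
          if inBlock p i u then ({x | inBlock p i x} : Finset (Fin n)).erase u else ∅ := by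
    intro x hx
    rw [mem_neighborFinset] at hx
    simp only [Hgraph, fromRel_adj] at hx
    obtain ⟨hne, (hu | ⟨i, h2i, hit, hiu, hix⟩) | (hx | ⟨i, h2i, hit, hix, hiu⟩)⟩ := hx
    all_goals rw [mem_union, mem_biUnion]
    · exact Or.inl (by simp [hu, hne.symm])
    · exact Or.inr ⟨i, by simp [h2i, hit], by simp [hiu, hix, hne.symm]⟩
    · exact Or.inl (by split_ifs <;> simp [hx, hne.symm])
    · exact Or.inr ⟨i, by simp [h2i, hit], by simp [hiu, hix, hne.symm]⟩
  calc _ ≤ _ := card_le_card hsub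
    _ ≤ _ := card_union_le _ _
    _ ≤ _ := by
      refine add_le_add ?_ (card_biUnion_le.trans (sum_le_sum fun i _ => ?_))
      · split_ifs <;> simp [Fin.card_filter_val_lt]
      · split_ifs with hu
        · have := card_filter_inBlock_le (n := n) (p := p) i
          rw [card_erase_of_mem (mem_filter.2 ⟨mem_univ u, hu⟩)]
          omega
        · simp

lemma two_mul_ncard_edgeSet_Hgraph_le (hk : p 1 - 2 ≤ n) :
    2 * (Hgraph n t p).edgeSet.ncard ≤
      (p 1 - 2) * (n - 1) + (n - (p 1 - 2)) * (p 1 - 2) + ∑ i ∈ Icc 2 t, p i * (p i + 1) := by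
  classical
  have hlow : #{x : Fin n | (x : ℕ) < p 1 - 2} = p 1 - 2 := by
    rw [Fin.card_filter_val_lt, min_eq_right hk]
  have hhigh : #{x : Fin n | ¬ (x : ℕ) < p 1 - 2} = n - (p 1 - 2) := by
    have := card_filter_add_card_filter_not (s := univ) fun x : Fin n => (x : ℕ) < p 1 - 2
    rw [card_univ, Fintype.card_fin] at this
    omega
  rw [← coe_edgeFinset, Set.ncard_coe_finset, ← sum_degrees_eq_twice_card_edges]
  calc _ ≤ ∑ u : Fin n, ((if (u : ℕ) < p 1 - 2 then n - 1 else p 1 - 2) +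
        ∑ i ∈ Icc 2 t, if inBlock p i u then p i else 0) :=
        sum_le_sum fun u _ => Hgraph_degree_le u
    _ = (p 1 - 2) * (n - 1) + (n - (p 1 - 2)) * (p 1 - 2) +
        ∑ i ∈ Icc 2 t, #{x : Fin n | inBlock p i x} * p i := by
      rw [sum_add_distrib, sum_comm, sum_ite, sum_const, sum_const, hlow, hhigh]
      simp [sum_ite]
    _ ≤ _ := by
      refine add_le_add_right (sum_le_sum fun i _ => ?_) _
      exact (Nat.mul_le_mul_right _ (card_filter_inBlock_le i)).trans_eq (mul_comm _ _)

end Hgraph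

/-- With `d = δ - k`, the right side exceeds the left by `d (n + 1 - 3k - d) - T`, which is
positive since `1 ≤ d ≤ k ≤ T` and `3k + T < n`. -/
lemma Hgraph_bound_lt_of_lt_of_le_two_mul {n k δ T : ℕ} (hkT : k ≤ T) (hn : 3 * k + T < n)
    (hδ : k < δ) (hδ' : δ ≤ 2 * k) :
    k * (n - 1) + (n - k) * k + T < (n - δ) * δ + δ + k * (k - 1) + (n - δ - 1) * k := by
  zify [show k ≤ n by omega, show δ ≤ n by omega, show 1 ≤ n - δ by omega,
    show 1 ≤ n by omega, show 1 ≤ k by omega] at *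
  nlinarith [mul_nonneg (show (0 : ℤ) ≤ δ - k - 1 by omega)
      (show (0 : ℤ) ≤ T + 1 - (δ - k) by omega),
    mul_nonneg (show (0 : ℤ) ≤ δ - k by omega) (show (0 : ℤ) ≤ n - 3 * k - T - 1 by omega)]

lemma Hgraph_bound_lt_of_two_mul_lt {n k δ T : ℕ} (hn : T < n) (hδ : 2 * k < δ) :
    k * (n - 1) + (n - k) * k + T < n * δ := by
  have h1 : k * (n - 1) ≤ k * n := Nat.mul_le_mul_left _ (Nat.sub_le _ _)
  have h2 : (n - k) * k ≤ n * k := Nat.mul_le_mul_right _ (Nat.sub_le _ _)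
  nlinarith

lemma IsSat.degree_le {n t : ℕ} {p : ℕ → ℕ} {G : SimpleGraph (Fin n)} [DecidableRel G.Adj]
    (ht : 2 ≤ t) (hmono : ∀ i j, 1 ≤ i → i ≤ j → j ≤ t → p i ≤ p j)
    (hn : 3 * (p 1 - 2) + ∑ i ∈ Icc 2 t, p i * (p i + 1) < n)
    (hsat : IsSat G (cliqueUnion t p)) (hE : G.edgeSet.ncard ≤ (Hgraph n t p).edgeSet.ncard)
    (v : Fin n) (hmin : ∀ u, G.degree v ≤ G.degree u) :
    G.degree v ≤ p 1 - 2 := by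
  set k := p 1 - 2
  set T := ∑ i ∈ Icc 2 t, p i * (p i + 1)
  have hkT : k ≤ T := calc
    k ≤ p 2 * (p 2 + 1) := by
      have := hmono 1 2 le_rfl (by omega) ht
      have : p 2 ≤ p 2 * (p 2 + 1) := Nat.le_mul_of_pos_right _ (Nat.succ_pos _)
      omega
    _ ≤ T := single_le_sum (f := fun i => p i * (p i + 1)) (fun _ _ => Nat.zero_le _)
      (mem_Icc.2 ⟨le_rfl, ht⟩)
  have hG : 2 * #G.edgeFinset ≤ k * (n - 1) + (n - k) * k + T := by
    rw [← Set.ncard_coe_finset, coe_edgeFinset]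
    exact (Nat.mul_le_mul_left 2 hE).trans (two_mul_ncard_edgeSet_Hgraph_le (by omega))
  by_contra! hδ
  rcases lt_or_ge (2 * k) (G.degree v) with hdense | hsparse
  · have : n * G.degree v ≤ 2 * #G.edgeFinset := by
      rw [← sum_degrees_eq_twice_card_edges]
      simpa using card_nsmul_le_sum univ _ _ fun u _ => hmin u
    exact (Hgraph_bound_lt_of_two_mul_lt (by omega) hdense).not_ge (this.trans hG)
  · have hR : ∀ u, u ≠ v → ¬ G.Adj v u → ∃ Q : Finset (Fin n), k ≤ #Q ∧
        Q ⊆ G.neighborFinset u ∩ G.neighborFinset v ∧ G.IsClique (Q : Set (Fin n)) := by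
      intro u hu huv
      obtain ⟨Q, hQ, hQc, hQadj⟩ := hsat.exists_common_clique hmono hu fun h => huv h.symm
      exact ⟨Q, hQ, fun x hx => by simpa using hQadj x hx, hQc⟩
    obtain ⟨u₀, -, hu₀⟩ := exists_mem_notMem_of_card_lt_card
      (s := insert v (G.neighborFinset v)) (t := univ) <| by
        have := card_insert_le v (G.neighborFinset v)
        rw [card_neighborFinset_eq_degree] at this
        rw [card_univ, Fintype.card_fin]
        omega
    rw [mem_insert, mem_neighborFinset, not_or] at hu₀
    obtain ⟨Q, hQk, hQ, hQc⟩ := hR u₀ hu₀.1 hu₀.2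
    have := G.le_two_mul_card_edgeFinset_of_common_neighbors v hmin
      (fun u hu huv => (hR u hu huv).elim fun Q hQ => hQ.1.trans (card_le_card hQ.2.1))
      (hQ.trans inter_subset_right) hQc
    rw [Fintype.card_fin] at this
    have hkk : k * (k - 1) ≤ #Q * (#Q - 1) := Nat.mul_le_mul hQk (Nat.sub_le_sub_right hQk 1)
    exact (Hgraph_bound_lt_of_lt_of_le_two_mul hkT hn hδ hsparse).not_ge (by omega)

lemma exists_cliqueUnionTail_copy_avoiding {t : ℕ} {p : ℕ → ℕ}
    (hmono : ∀ i j, 1 ≤ i → i ≤ j → j ≤ t → p i ≤ p j) (i₀ : Fin t) (hi₀ : p (i₀ + 1) ≤ p 1) :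
    ∃ g : (Σ i : Fin (t - 1), Fin (p ((i : ℕ) + 2))) → Σ i : Fin t, Fin (p ((i : ℕ) + 1)),
      Function.Injective g ∧
        (∀ c d, (cliqueUnionTail t p).Adj c d → (cliqueUnion t p).Adj (g c) (g d)) ∧
        ∀ c, (g c).1 ≠ i₀ := by
  obtain ⟨m, rfl⟩ : ∃ m, t = m + 1 := ⟨t - 1, by have := i₀.pos; omega⟩
  have hsize : ∀ k : Fin m, p (k + 2) ≤ p (i₀.succAbove k + 1) := by
    intro k
    rcases lt_or_ge k.castSucc i₀ with hk | hk
    · rw [i₀.succAbove_of_castSucc_lt k hk, Fin.val_castSucc]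
      have : (k : ℕ) < i₀ := hk
      calc p (k + 2) ≤ p (i₀ + 1) := hmono _ _ (by omega) (by omega) (by omega)
        _ ≤ p 1 := hi₀
        _ ≤ p (k + 1) := hmono _ _ le_rfl (by omega) (by omega)
    · rw [i₀.succAbove_of_le_castSucc k hk, Fin.val_succ]
  let g : (Σ i : Fin m, Fin (p ((i : ℕ) + 2))) → Σ i : Fin (m + 1), Fin (p ((i : ℕ) + 1)) :=
    Sigma.map i₀.succAbove fun k => Fin.castLE (hsize k)
  have hg : Function.Injective g :=
    Fin.succAbove_right_injective.sigma_map fun k => Fin.castLE_injective (hsize k)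
  exact ⟨g, hg, fun c d ⟨hcd, hc⟩ => ⟨hg.ne hcd, congrArg i₀.succAbove hc⟩,
    fun c => i₀.succAbove_ne c.1⟩

/-- For `w ∉ S ∪ {v}`, `G[V(G) \ (S ∪ {v,w})]` contains `K_{p₂} ∪ ⋯ ∪ K_{p_t}`. -/
theorem tail_copy_exists (n t : ℕ) (p : ℕ → ℕ) (ht : 2 ≤ t) (hp1 : 2 ≤ p 1)
    (hmono : ∀ i j, 1 ≤ i → i ≤ j → j ≤ t → p i ≤ p j)
    (hn : 3 * (p 1 - 2) + ∑ i ∈ Finset.Icc 2 t, p i * (p i + 1) < n)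
    (G : SimpleGraph (Fin n)) (hsat : IsSat G (cliqueUnion t p))
    (hE : G.edgeSet.ncard ≤ (Hgraph n t p).edgeSet.ncard)
    (v : Fin n)
    (hmin : ∀ u, (G.neighborSet v).ncard ≤ (G.neighborSet u).ncard)
    (w : Fin n) (hw : w ∉ G.neighborSet v ∪ {v}) :
    IsSubgraphOf (cliqueUnionTail t p)
      (G.induce ((G.neighborSet v ∪ {v, w})ᶜ)) := by
  classical
  have hdeg : ∀ u, (G.neighborSet u).ncard = G.degree u := fun u => by
    rw [← card_neighborFinset_eq_degree, neighborFinset_def, Set.ncard_eq_toFinset_card']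
  have hδ : (G.neighborSet v).ncard ≤ p 1 - 2 := by
    simpa only [hdeg] using
      hsat.degree_le ht hmono hn hE v fun u => by simpa only [hdeg] using hmin u
  simp only [Set.mem_union, mem_neighborSet, Set.mem_singleton_iff, not_or] at hw
  obtain ⟨f, i₀, a, b, hf, hab, rfl, rfl, hadj⟩ :=
    hsat.exists_cliqueUnion_copy_through (Ne.symm hw.2) hw.1
  obtain ⟨Q, hQ, hQblock, -, hQadj⟩ := exists_clique_of_cliqueUnion_copy_through hf hab hadj
  have hQN : (Q : Set (Fin n)) ⊆ G.neighborSet (f ⟨i₀, a⟩) := fun x hx => (hQadj x hx).1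
  have hQN_card := Set.ncard_le_ncard hQN
  rw [Set.ncard_coe_finset] at hQN_card
  have hp_le := hmono 1 (i₀ + 1) le_rfl (by omega) i₀.2
  have hNQ : (Q : Set (Fin n)) = G.neighborSet (f ⟨i₀, a⟩) :=
    Set.eq_of_subset_of_ncard_le hQN (by rw [Set.ncard_coe_finset]; omega) (Set.toFinite _)
  have hblock : G.neighborSet (f ⟨i₀, a⟩) ∪ {f ⟨i₀, a⟩, f ⟨i₀, b⟩} ⊆
      Set.range fun x => f ⟨i₀, x⟩ :=
    Set.union_subset (hNQ ▸ hQblock)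
      (Set.insert_subset ⟨a, rfl⟩ (Set.singleton_subset_iff.2 ⟨b, rfl⟩))
  obtain ⟨g, hg, hgadj, hgi₀⟩ := exists_cliqueUnionTail_copy_avoiding hmono i₀ (by omega)
  refine ⟨fun c => ⟨f (g c), fun hc => ?_⟩, fun c d h => hg (hf (congrArg Subtype.val h)),
    fun c d hcd => hadj _ _ (hgadj c d hcd) fun h => hgi₀ c ?_⟩
  · obtain ⟨x, hx⟩ := hblock hc
    exact hgi₀ c (congrArg Sigma.fst (hf hx)).symm
  · have : g c ∈ s(g c, g d) := Sym2.mem_mk_left _ _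
    rw [h, Sym2.mem_iff] at this
    rcases this with h' | h' <;> rw [h']
end

section
/- H(n; p, q, q, ..., q) (with t-1 copies of q) is a (K_p ∪ (t-1)K_q)-saturated graph for every t ≥ 2 and 2 ≤ p < q and sufficiently large n. -/
open SimpleGraph Finset

/-!
Write `C` for the apex clique `K_{p-2}` and `B₂, …, B_t` for the blocks `K_{q+1}`. A clique with at
least `p ≥ 2` vertices has two vertices outside `C`; these are adjacent only inside a common block,
so the clique lies in some `C ∪ B_b`. Among `t` disjoint such cliques two share a block, and then
`C ∪ B_b`, of size `p + q - 1`, would contain `p + q` vertices. Conversely, a non-edge `uv` has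
`u, v ∉ C` and no block containing both, so after adding it `C ∪ {u, v}` is a `K_p` and every block
minus `{u, v}` still contains a `K_q`.
-/

section CliqueUnion

variable {V : Type*} {G : SimpleGraph V} {t : ℕ} {s : ℕ → ℕ}

theorem IsSubgraphOf.exists_pairwise_disjoint_isNClique (h : IsSubgraphOf (cliqueUnion t s) G) :
    ∃ K : Fin t → Finset V, (∀ i : Fin t, G.IsNClique (s ((i : ℕ) + 1)) (K i)) ∧
      Pairwise fun i j => Disjoint (K i) (K j) := by
  obtain ⟨f, hf, hadj⟩ := h
  have hinj (i : Fin t) : Function.Injective fun j : Fin (s ((i : ℕ) + 1)) => f ⟨i, j⟩ :=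
    fun j j' h => by simpa using hf h
  refine ⟨fun i => univ.map ⟨_, hinj i⟩, fun i => ⟨?_, by simp⟩, fun i i' hii' => ?_⟩
  · simp only [coe_map, Function.Embedding.coeFn_mk, coe_univ, Set.image_univ]
    rintro _ ⟨j, rfl⟩ _ ⟨j', rfl⟩ hne
    exact hadj _ _ ⟨fun h => hne (congrArg f h), rfl⟩
  · refine Finset.disjoint_left.2 ?_
    simp only [mem_map, mem_univ, true_and, Function.Embedding.coeFn_mk, not_exists,
      forall_exists_index, forall_apply_eq_imp_iff]
    exact fun j j' h => hii' (congrArg Sigma.fst (hf h)).symm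

theorem isSubgraphOf_cliqueUnion (K : Fin t → Finset V) (hK : ∀ i, G.IsClique (K i : Set V))
    (hcard : ∀ i : Fin t, s ((i : ℕ) + 1) ≤ #(K i))
    (hdisj : Pairwise fun i j => Disjoint (K i) (K j)) :
    IsSubgraphOf (cliqueUnion t s) G := by
  have e (i : Fin t) : Fin (s ((i : ℕ) + 1)) ↪ K i :=
    (Function.Embedding.nonempty_of_card_le (by simpa using hcard i)).some
  refine ⟨fun x => e x.1 x.2, ?_, ?_⟩
  · rintro ⟨i, j⟩ ⟨i', j'⟩ (h : (e i j : V) = e i' j')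
    obtain rfl : i = i' := by
      by_contra hne
      exact Finset.disjoint_left.1 (hdisj hne) (e i j).2 (h ▸ (e i' j').2)
    rw [(e i).injective (Subtype.ext h)]
  · rintro ⟨i, j⟩ ⟨i', j'⟩ ⟨hne, rfl : i = i'⟩
    exact hK i (e i j).2 (e i j').2 fun h => hne (by rw [(e i).injective (Subtype.ext h)])

end CliqueUnion

section Blocks

variable {s : ℕ → ℕ} {a b b' : ℕ}

theorem blockStart_two : blockStart s 2 = s 1 - 2 := by
  simp [blockStart]

theorem blockStart_succ (hb : 2 ≤ b) : blockStart s (b + 1) = blockStart s b + (s b + 1) := by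
  simp only [blockStart, sum_Ico_succ_top hb, add_assoc]

theorem blockStart_mono : Monotone (blockStart s) := fun _ _ h =>
  Nat.add_le_add_left (sum_le_sum_of_subset (Ico_subset_Ico_right h)) _

theorem inBlock_iff (hb : 2 ≤ b) :
    inBlock s b a ↔ blockStart s b ≤ a ∧ a < blockStart s (b + 1) := by
  rw [blockStart_succ hb, inBlock]

theorem eq_of_inBlock_of_inBlock (hb : 2 ≤ b) (hb' : 2 ≤ b') (h : inBlock s b a)
    (h' : inBlock s b' a) : b = b' := by
  rw [inBlock_iff hb] at h
  rw [inBlock_iff hb'] at h'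
  by_contra hne
  rcases Nat.lt_or_gt_of_ne hne with hlt | hlt
  · have := blockStart_mono (s := s) (show b + 1 ≤ b' from hlt); omega
  · have := blockStart_mono (s := s) (show b' + 1 ≤ b from hlt); omega

end Blocks

namespace Hgraph

variable {n t : ℕ} {s : ℕ → ℕ} {b : ℕ} {x y : Fin n}

def core (s : ℕ → ℕ) (n : ℕ) : Finset (Fin n) :=
  {a | (a : ℕ) < s 1 - 2}

def block (s : ℕ → ℕ) (n b : ℕ) : Finset (Fin n) :=
  {a | blockStart s b ≤ (a : ℕ) ∧ (a : ℕ) < blockStart s b + (s b + 1)}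

theorem mem_core : x ∈ core s n ↔ (x : ℕ) < s 1 - 2 := by
  simp [core]

theorem mem_block : x ∈ block s n b ↔ inBlock s b x := by
  simp [block, inBlock]

theorem adj_iff : (Hgraph n t s).Adj x y ↔ x ≠ y ∧
    (x ∈ core s n ∨ y ∈ core s n ∨ ∃ b, 2 ≤ b ∧ b ≤ t ∧ x ∈ block s n b ∧ y ∈ block s n b) := by
  simp only [Hgraph, fromRel_adj, mem_core, mem_block]
  grind

theorem card_core : #(core s n) = min n (s 1 - 2) :=
  Fin.card_filter_val_lt

theorem card_block (hb : 2 ≤ b) :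
    #(block s n b) = min n (blockStart s (b + 1)) - min n (blockStart s b) := by
  have hblock : block s n b = ({a | (a : ℕ) < blockStart s (b + 1)} : Finset (Fin n)) \
      ({a | (a : ℕ) < blockStart s b} : Finset (Fin n)) := by
    ext a
    simp only [mem_block, inBlock_iff hb, mem_sdiff, mem_filter, mem_univ, true_and]
    omega
  rw [hblock, card_sdiff_of_subset, Fin.card_filter_val_lt, Fin.card_filter_val_lt]
  intro a
  simp only [mem_filter, mem_univ, true_and]
  have := blockStart_mono (s := s) (Nat.le_add_right b 1)
  omega

theorem disjoint_core_block (hb : 2 ≤ b) : Disjoint (core s n) (block s n b) := by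
  refine Finset.disjoint_left.2 fun a ha ha' => ?_
  rw [mem_core] at ha
  rw [mem_block, inBlock_iff hb] at ha'
  have := blockStart_mono (s := s) hb
  rw [blockStart_two] at this
  omega

theorem disjoint_block {b' : ℕ} (hb : 2 ≤ b) (hb' : 2 ≤ b') (hne : b ≠ b') :
    Disjoint (block s n b) (block s n b') :=
  Finset.disjoint_left.2 fun _ ha ha' =>
    hne (eq_of_inBlock_of_inBlock hb hb' (mem_block.1 ha) (mem_block.1 ha'))

theorem adj_of_mem_core (hx : x ∈ core s n) (hxy : x ≠ y) : (Hgraph n t s).Adj x y :=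
  adj_iff.2 ⟨hxy, Or.inl hx⟩

theorem isClique_block (hb : 2 ≤ b) (hbt : b ≤ t) :
    (Hgraph n t s).IsClique (block s n b : Set (Fin n)) :=
  fun _ hx _ hy hxy => adj_iff.2 ⟨hxy, Or.inr (Or.inr ⟨b, hb, hbt, hx, hy⟩)⟩

theorem exists_subset_core_union_block {K : Finset (Fin n)} (hs : 2 ≤ s 1)
    (hK : (Hgraph n t s).IsClique (K : Set (Fin n))) (hcard : s 1 ≤ #K) :
    ∃ b, 2 ≤ b ∧ b ≤ t ∧ K ⊆ core s n ∪ block s n b := by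
  have htwo : 1 < #(K \ core s n) := by
    have := le_card_sdiff (core s n) K
    have := (card_core (s := s) (n := n)).trans_le (min_le_right _ _)
    omega
  obtain ⟨x, hx, y, hy, hxy⟩ := one_lt_card.1 htwo
  rw [mem_sdiff] at hx hy
  obtain ⟨-, hxc | hyc | ⟨b, hb, hbt, hxb, -⟩⟩ := adj_iff.1 (hK hx.1 hy.1 hxy)
  · exact absurd hxc hx.2
  · exact absurd hyc hy.2
  refine ⟨b, hb, hbt, fun z hz => ?_⟩
  rw [mem_union]
  by_cases hzx : z = x
  · exact Or.inr (hzx ▸ hxb)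
  obtain ⟨-, hzc | hxc | ⟨b', hb', -, hzb', hxb'⟩⟩ := adj_iff.1 (hK hz hx.1 hzx)
  · exact Or.inl hzc
  · exact absurd hxc hx.2
  · exact Or.inr (eq_of_inBlock_of_inBlock hb' hb (mem_block.1 hxb') (mem_block.1 hxb) ▸ hzb')

theorem card_core_union_block_le (hb : 2 ≤ b) :
    #(core s n ∪ block s n b) ≤ s 1 - 2 + (s b + 1) := by
  have := card_union_le (core s n) (block s n b)
  rw [card_core, card_block hb, blockStart_succ hb] at this
  omega

theorem isClique_core_union_pair (u v : Fin n) :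
    (Hgraph n t s ⊔ fromEdgeSet {s(u, v)}).IsClique (core s n ∪ {u, v} : Finset (Fin n)) := by
  intro x hx y hy hxy
  rw [sup_adj]
  by_cases hxc : x ∈ core s n
  · exact Or.inl (adj_of_mem_core hxc hxy)
  by_cases hyc : y ∈ core s n
  · exact Or.inl (adj_of_mem_core hyc hxy.symm).symm
  simp only [coe_union, coe_pair, Set.mem_union, mem_coe, hxc, hyc, false_or,
    Set.mem_insert_iff, Set.mem_singleton_iff] at hx hy
  refine Or.inr ⟨?_, hxy⟩
  rcases hx with rfl | rfl <;> rcases hy with rfl | rfl <;> simp_all [Sym2.eq_swap]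

theorem le_card_core_union_pair (hn : s 1 - 2 ≤ n) {u v : Fin n} (hu : u ∉ core s n)
    (hv : v ∉ core s n) (huv : u ≠ v) : s 1 ≤ #(core s n ∪ {u, v}) := by
  rw [card_union_of_disjoint (by simp [hu, hv]), card_pair huv, card_core]
  omega

theorem le_card_block_sdiff_pair (hb : 2 ≤ b) (hn : blockStart s (b + 1) ≤ n) {u v : Fin n}
    (huv : ¬ (u ∈ block s n b ∧ v ∈ block s n b)) : s b ≤ #(block s n b \ {u, v}) := by
  have hinter : #(block s n b ∩ {u, v}) ≤ 1 := by
    refine card_le_one.2 fun x hx y hy => ?_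
    simp only [mem_inter, mem_insert, mem_singleton] at hx hy
    rcases hx with ⟨hx, rfl | rfl⟩ <;> rcases hy with ⟨hy, rfl | rfl⟩ <;> tauto
  have := card_sdiff_add_card_inter (block s n b) {u, v}
  have := card_block (s := s) (n := n) hb
  have := blockStart_succ (s := s) hb
  omega

theorem isSubgraphOf_cliqueUnion_sup_edge (hn : blockStart s (t + 1) ≤ n) {u v : Fin n}
    (huv : u ≠ v) (hadj : ¬ (Hgraph n t s).Adj u v) :
    IsSubgraphOf (cliqueUnion t s) (Hgraph n t s ⊔ fromEdgeSet {s(u, v)}) := by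
  simp only [adj_iff, ne_eq, huv, not_false_eq_true, true_and, not_or, not_exists,
    not_and] at hadj
  obtain ⟨hu, hv, hsplit⟩ := hadj
  refine isSubgraphOf_cliqueUnion
    (fun i => if (i : ℕ) = 0 then core s n ∪ {u, v} else block s n (i + 1) \ {u, v})
    (fun i => ?_) (fun i => ?_) (fun i j hij => ?_)
  · split_ifs
    · exact isClique_core_union_pair u v
    · exact ((isClique_block (b := (i : ℕ) + 1) (by omega) (by omega)).subset
        (coe_subset.2 sdiff_subset)).mono le_sup_left
  · have hi := i.isLt
    split_ifs with hi0
    · rw [hi0]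
      refine le_card_core_union_pair ?_ hu hv huv
      exact blockStart_two ▸ (blockStart_mono (by omega : 2 ≤ t + 1)).trans hn
    · exact le_card_block_sdiff_pair (by omega) ((blockStart_mono (by omega)).trans hn)
        fun h => hsplit _ (by omega) (by omega) h.1 h.2
  · have hij' : (i : ℕ) ≠ j := Fin.val_ne_of_ne hij
    dsimp only
    split_ifs with hi hj hj
    · omega
    · exact disjoint_union_left.2
        ⟨(disjoint_core_block (by omega)).mono_right sdiff_subset, disjoint_sdiff⟩
    · exact (disjoint_union_left.2
        ⟨(disjoint_core_block (by omega)).mono_right sdiff_subset, disjoint_sdiff⟩).symm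
    · exact (disjoint_block (by omega) (by omega) (by omega)).mono sdiff_subset sdiff_subset

end Hgraph

theorem not_isSubgraphOf_cliqueUnion_Hgraph {n t p q : ℕ} (ht : 1 ≤ t) (hp : 2 ≤ p)
    (hpq : p ≤ q) :
    ¬ IsSubgraphOf (cliqueUnion t fun i => if i = 1 then p else q)
      (Hgraph n t fun i => if i = 1 then p else q) := by
  intro h
  obtain ⟨K, hK, hdisj⟩ := h.exists_pairwise_disjoint_isNClique
  have hp1 : (if 1 = 1 then p else q) = p := if_pos rfl
  choose b hb hbt hKb using fun i : Fin t =>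
    Hgraph.exists_subset_core_union_block (hp1 ▸ hp) (hK i).isClique
      (by rw [(hK i).card_eq, hp1]; split_ifs <;> omega)
  obtain ⟨i, -, j, -, hij, hbij⟩ := exists_ne_map_eq_of_card_lt_of_maps_to (s := univ)
    (t := Icc 2 t) (by simp only [card_univ, Fintype.card_fin, Nat.card_Icc]; omega)
    fun i _ => mem_Icc.2 ⟨hb i, hbt i⟩
  have hle := (card_le_card (union_subset (hKb i) (hbij ▸ hKb j))).trans
    (Hgraph.card_core_union_block_le (hb i))
  rw [card_union_of_disjoint (hdisj hij), (hK i).card_eq, (hK j).card_eq, hp1] at hle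
  have hij' : (i : ℕ) ≠ j := Fin.val_ne_of_ne hij
  split_ifs at hle <;> omega

/-- `H(n; p, q, …, q)` is `(K_p ∪ (t-1)K_q)`-saturated for `t ≥ 2`, `2 ≤ p < q`. -/
theorem Hgraph_pqq_saturated (n t : ℕ) (p q : ℕ) (ht : 2 ≤ t) (hp : 2 ≤ p)
    (hpq : p < q)
    (hfit : blockStart (fun i => if i = 1 then p else q) (t + 1) + 1 ≤ n) :
    IsSat (Hgraph n t (fun i => if i = 1 then p else q))
      (cliqueUnion t (fun i => if i = 1 then p else q)) :=
  ⟨not_isSubgraphOf_cliqueUnion_Hgraph (by omega) hp hpq.le,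
    fun _ _ huv hadj => Hgraph.isSubgraphOf_cliqueUnion_sup_edge (by omega) huv hadj⟩
end
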